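/- arXiv:math/0308146 — 2 statements merged into one kernel-verified Lean document; each statement's English description precedes it below -/
import Mathlib

section
/- Every pure O-sequence (h_1, …, h_k) satisfies h_i ≤ h_j for all indices with i ≤ j ≤ k − i (with h_0 = 1). -/
/-- `(h 1, …, h k)` (with `h 0 = 1`) is a pure O-sequence: `h k > 0` and there exist
monomials `m 1, …, m (h k)` of degree `k` in the variables `x 1, …, x (h 1)`
(identified with their exponent vectors in `ℕ ^ (h 1)`) such that for every
`0 ≤ l ≤ k`, `h l` is the number of monomials of degree `l` dividing at least one
of the `m i`. -/
def IsPureOSeq (k : ℕ) (h : ℕ → ℕ) : Prop :=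
  h 0 = 1 ∧ 0 < h k ∧
  ∃ m : Fin (h k) → (Fin (h 1) → ℕ),
    (∀ i, ∑ t, m i t = k) ∧
    ∀ l ≤ k, h l = {d : Fin (h 1) → ℕ | (∑ t, d t) = l ∧ ∃ i, d ≤ m i}.ncard


/-- Element at level `l` of a "bent" chain in a grid construction. -/
def scdAux {n : ℕ} (F : ℕ → (Fin n → ℕ)) (r s c : ℕ) (l : ℕ) : Fin (n+1) → ℕ :=
  if l ≤ r + c then Fin.snoc (F (r+s)) (l - (r+s)) else Fin.snoc (F (l - (c-s))) (c-s)

/-- Minimal level of the symmetric chain through `d` in the SCD of `[0, m]`. -/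
def scdR : {n : ℕ} → (Fin n → ℕ) → (Fin n → ℕ) → ℕ
  | 0, _, _ => 0
  | (n+1), m, d =>
    scdR (Fin.init m) (Fin.init d) +
      min ((∑ t, Fin.init d t) - scdR (Fin.init m) (Fin.init d))
        (m (Fin.last n) - d (Fin.last n))

/-- Element at level `l` of the symmetric chain through `d` in the SCD of `[0, m]`. -/
def scdF : {n : ℕ} → (Fin n → ℕ) → (Fin n → ℕ) → ℕ → (Fin n → ℕ)
  | 0, _, d => fun _ => d
  | (n+1), m, d =>
    scdAux (scdF (Fin.init m) (Fin.init d)) (scdR (Fin.init m) (Fin.init d))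
      (min ((∑ t, Fin.init d t) - scdR (Fin.init m) (Fin.init d))
        (m (Fin.last n) - d (Fin.last n)))
      (m (Fin.last n))

lemma sum_snoc' {n : ℕ} (a : Fin n → ℕ) (x : ℕ) :
    ∑ t, (Fin.snoc a x : Fin (n+1) → ℕ) t = (∑ t, a t) + x := by
  rw [Fin.sum_univ_castSucc]; simp [Fin.snoc_castSucc]

lemma sum_eq_init {n : ℕ} (d : Fin (n+1) → ℕ) :
    ∑ t, d t = (∑ t, Fin.init d t) + d (Fin.last n) := by
  rw [Fin.sum_univ_castSucc]; rfl

lemma snoc_le_snoc' {n : ℕ} {a b : Fin n → ℕ} {x y : ℕ} (h1 : a ≤ b) (h2 : x ≤ y) :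
    (Fin.snoc a x : Fin (n+1) → ℕ) ≤ Fin.snoc b y := by
  intro t
  induction t using Fin.lastCases with
  | last => simpa using h2
  | cast i => simpa [Fin.snoc_castSucc] using h1 i

lemma init_le_init {n : ℕ} {d m : Fin (n+1) → ℕ} (h : d ≤ m) : Fin.init d ≤ Fin.init m :=
  fun t => h _


lemma scdR_succ {n : ℕ} (m d : Fin (n+1) → ℕ) :
    scdR m d = scdR (Fin.init m) (Fin.init d) +
      min ((∑ t, Fin.init d t) - scdR (Fin.init m) (Fin.init d))
        (m (Fin.last n) - d (Fin.last n)) := rfl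

lemma scdF_succ {n : ℕ} (m d : Fin (n+1) → ℕ) :
    scdF m d = scdAux (scdF (Fin.init m) (Fin.init d)) (scdR (Fin.init m) (Fin.init d))
      (min ((∑ t, Fin.init d t) - scdR (Fin.init m) (Fin.init d))
        (m (Fin.last n) - d (Fin.last n)))
      (m (Fin.last n)) := rfl

theorem scd_spec : ∀ {n : ℕ} (m d : Fin n → ℕ), d ≤ m →
    (scdR m d ≤ ∑ t, d t) ∧ ((∑ t, d t) + scdR m d ≤ ∑ t, m t) ∧
    scdF m d (∑ t, d t) = d ∧
    ∀ l, scdR m d ≤ l → l + scdR m d ≤ ∑ t, m t →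
      scdF m d l ≤ m ∧ (∑ t, scdF m d l t) = l ∧ scdR m (scdF m d l) = scdR m d ∧
      scdF m (scdF m d l) = scdF m d ∧
      ∀ l', l ≤ l' → l' + scdR m d ≤ ∑ t, m t → scdF m d l ≤ scdF m d l' := by
  intro n
  induction n with
  | zero =>
    intro m d _
    refine ⟨by simp [scdR], by simp [scdR], rfl, ?_⟩
    intro l hl1 hl2
    have hs : (∑ t : Fin 0, m t) = 0 := by simp
    have hl0 : l = 0 := by omega
    subst hl0
    have hfun : ∀ (e : Fin 0 → ℕ), e ≤ m := fun e t => t.elim0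
    exact ⟨hfun _, by simp, rfl, rfl, fun l' h1 h2 => le_refl _⟩
  | succ n ih =>
    intro m d hdm
    have hd'm' : Fin.init d ≤ Fin.init m := init_le_init hdm
    have hyc : d (Fin.last n) ≤ m (Fin.last n) := hdm _
    obtain ⟨hr'D, hDK, hfix, hmain⟩ := ih (Fin.init m) (Fin.init d) hd'm'
    set m' := Fin.init m with hm'
    set d' := Fin.init d with hd'
    set c := m (Fin.last n) with hc
    set y := d (Fin.last n) with hy
    set K := ∑ t, m' t with hK
    set D := ∑ t, d' t with hD
    set r' := scdR m' d' with hr'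
    set s := min (D - r') (c - y) with hs
    have hscdR : scdR m d = r' + s := scdR_succ m d
    have hscdF : scdF m d = scdAux (scdF m' d') r' s c := scdF_succ m d
    have hsum_d : ∑ t, d t = D + y := sum_eq_init d
    have hsum_m : ∑ t, m t = K + c := sum_eq_init m
    have hsnoc_d : Fin.snoc d' y = d := Fin.snoc_init_self d
    refine ⟨?_, ?_, ?_, ?_⟩
    · rw [hscdR, hsum_d]; omega
    · rw [hscdR, hsum_d, hsum_m]; omega
    · -- scdF m d (∑ d) = d
      rw [hsum_d, hscdF]
      unfold scdAux
      by_cases hcase : D + y ≤ r' + c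
      · rw [if_pos hcase]
        have h1 : r' + s = D := by omega
        have h2 : D + y - (r' + s) = y := by omega
        rw [h2, h1, hfix, hsnoc_d]
      · rw [if_neg hcase]
        have h2 : c - s = y := by omega
        rw [h2]
        have h1 : D + y - y = D := by omega
        rw [h1, hfix, hsnoc_d]
    · intro l hl1 hl2
      rw [hscdR] at hl1
      rw [hscdR]
      rw [hsum_m] at hl2 ⊢
      rw [hscdF]
      by_cases hcase : l ≤ r' + c
      · -- vertical part of the chain
        have hl0a : r' ≤ r' + s := by omega
        have hl0b : (r' + s) + r' ≤ K := by omega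
        obtain ⟨he1, he2, he3, he4, he5⟩ := hmain (r' + s) hl0a hl0b
        have heaux : scdAux (scdF m' d') r' s c l =
            Fin.snoc (scdF m' d' (r' + s)) (l - (r' + s)) := by
          unfold scdAux; rw [if_pos hcase]
        rw [heaux]
        have hinit : Fin.init (Fin.snoc (scdF m' d' (r' + s)) (l - (r' + s)) : Fin (n+1) → ℕ) =
            scdF m' d' (r' + s) := by simp
        have hlast : (Fin.snoc (scdF m' d' (r' + s)) (l - (r' + s)) : Fin (n+1) → ℕ)
            (Fin.last n) = l - (r' + s) := by simp
        refine ⟨?_, ?_, ?_, ?_, ?_⟩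
        · conv_rhs => rw [← Fin.snoc_init_self m]
          exact snoc_le_snoc' he1 (by omega)
        · rw [sum_snoc', he2]; omega
        · rw [scdR_succ, hinit, hlast, ← hm', he2, he3]; omega
        · rw [scdF_succ, hinit, hlast, ← hm', he2, he3, he4]
          have : min (r' + s - r') (c - (l - (r' + s))) = s := by omega
          rw [this]
        · intro l' hll' hl2'
          by_cases hcase' : l' ≤ r' + c
          · have heaux' : scdAux (scdF m' d') r' s c l' =
                Fin.snoc (scdF m' d' (r' + s)) (l' - (r' + s)) := by
              unfold scdAux; rw [if_pos hcase']
            rw [heaux']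
            exact snoc_le_snoc' (le_refl _) (by omega)
          · have heaux' : scdAux (scdF m' d') r' s c l' =
                Fin.snoc (scdF m' d' (l' - (c - s))) (c - s) := by
              unfold scdAux; rw [if_neg hcase']
            rw [heaux']
            exact snoc_le_snoc' (he5 (l' - (c - s)) (by omega) (by omega)) (by omega)
      · -- horizontal part of the chain
        have hl1a : r' ≤ l - (c - s) := by omega
        have hl1b : (l - (c - s)) + r' ≤ K := by omega
        obtain ⟨he1, he2, he3, he4, he5⟩ := hmain (l - (c - s)) hl1a hl1b
        have heaux : scdAux (scdF m' d') r' s c l =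
            Fin.snoc (scdF m' d' (l - (c - s))) (c - s) := by
          unfold scdAux; rw [if_neg hcase]
        rw [heaux]
        have hinit : Fin.init (Fin.snoc (scdF m' d' (l - (c - s))) (c - s) : Fin (n+1) → ℕ) =
            scdF m' d' (l - (c - s)) := by simp
        have hlast : (Fin.snoc (scdF m' d' (l - (c - s))) (c - s) : Fin (n+1) → ℕ)
            (Fin.last n) = c - s := by simp
        refine ⟨?_, ?_, ?_, ?_, ?_⟩
        · conv_rhs => rw [← Fin.snoc_init_self m]
          exact snoc_le_snoc' he1 (by omega)
        · rw [sum_snoc', he2]; omega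
        · rw [scdR_succ, hinit, hlast, ← hm', he2, he3]; omega
        · rw [scdF_succ, hinit, hlast, ← hm', he2, he3, he4]
          have : min (l - (c - s) - r') (c - (c - s)) = s := by omega
          rw [this]
        · intro l' hll' hl2'
          have hcase' : ¬ (l' ≤ r' + c) := by omega
          have heaux' : scdAux (scdF m' d') r' s c l' =
              Fin.snoc (scdF m' d' (l' - (c - s))) (c - s) := by
            unfold scdAux; rw [if_neg hcase']
          rw [heaux']
          exact snoc_le_snoc' (he5 (l' - (c - s)) (by omega) (by omega)) (le_refl _)

/-- Every pure O-sequence `(h 1, …, h k)` (with `h 0 = 1`) satisfies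
`h i ≤ h j` for all `i ≤ j ≤ k − i`. -/
theorem pureOSeq_monotone (k : ℕ) (h : ℕ → ℕ) (hpo : IsPureOSeq k h) :
    ∀ i j : ℕ, i ≤ j → j ≤ k - i → h i ≤ h j := by
  classical
  obtain ⟨h0, hk, m, hdeg, hcount⟩ := hpo
  intro i j hij hjk
  have hik : i ≤ k := by omega
  have hjle : j ≤ k := by omega
  have hijk : i + j ≤ k := by omega
  rw [hcount i hik, hcount j hjle]
  have hne : ∀ (d : Fin (h 1) → ℕ), (∃ a, d ≤ m a) →
      (Finset.univ.filter fun a => d ≤ m a).Nonempty := by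
    intro d hex
    obtain ⟨a, ha⟩ := hex
    exact ⟨a, by simp [ha]⟩
  set idx : ∀ d : Fin (h 1) → ℕ, (∃ a, d ≤ m a) → Fin (h k) := fun d hex =>
    (Finset.univ.filter fun a => d ≤ m a).min' (hne d hex) with hidx
  have idx_le : ∀ (d : Fin (h 1) → ℕ) (hex : ∃ a, d ≤ m a), d ≤ m (idx d hex) := by
    intro d hex
    have := Finset.min'_mem (Finset.univ.filter fun a => d ≤ m a) (hne d hex)
    simpa [hidx] using this
  have idx_min : ∀ (d : Fin (h 1) → ℕ) (hex : ∃ a, d ≤ m a) (b : Fin (h k)),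
      d ≤ m b → idx d hex ≤ b := by
    intro d hex b hb
    exact Finset.min'_le _ b (by simp [hb])
  set F : (Fin (h 1) → ℕ) → (Fin (h 1) → ℕ) := fun d =>
    if hex : ∃ a, d ≤ m a then scdF (m (idx d hex)) d j else d with hF
  refine Set.ncard_le_ncard_of_injOn F ?_ ?_ ?_
  · -- maps to
    rintro d ⟨hdi, hex⟩
    simp only [hF, dif_pos hex]
    set a := idx d hex with ha
    have hda : d ≤ m a := idx_le d hex
    obtain ⟨S1, S2, S3, Smain⟩ := scd_spec (m a) d hda
    rw [hdi] at S1 S2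
    rw [hdeg a] at S2
    obtain ⟨T1, T2, _, _, _⟩ := Smain j (by omega) (by rw [hdeg a]; omega)
    exact ⟨T2, a, T1⟩
  · -- injective
    rintro d1 ⟨hd1, hex1⟩ d2 ⟨hd2, hex2⟩ heq
    simp only [hF, dif_pos hex1, dif_pos hex2] at heq
    set a := idx d1 hex1 with ha
    set b := idx d2 hex2 with hb
    have hd1a : d1 ≤ m a := idx_le d1 hex1
    have hd2b : d2 ≤ m b := idx_le d2 hex2
    obtain ⟨S1a, S2a, S3a, Smaina⟩ := scd_spec (m a) d1 hd1a
    obtain ⟨S1b, S2b, S3b, Smainb⟩ := scd_spec (m b) d2 hd2b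
    rw [hd1] at S1a S2a S3a
    rw [hd2] at S1b S2b S3b
    rw [hdeg a] at S2a
    rw [hdeg b] at S2b
    obtain ⟨Ta1, Ta2, Ta3, Ta4, Ta5⟩ := Smaina j (by omega) (by rw [hdeg a]; omega)
    obtain ⟨Tb1, Tb2, Tb3, Tb4, Tb5⟩ := Smainb j (by omega) (by rw [hdeg b]; omega)
    -- d1 ≤ its image, d2 ≤ its image
    obtain ⟨_, _, _, _, Ua5⟩ := Smaina i (by omega) (by rw [hdeg a]; omega)
    obtain ⟨_, _, _, _, Ub5⟩ := Smainb i (by omega) (by rw [hdeg b]; omega)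
    have hd1e : d1 ≤ scdF (m a) d1 j := by
      have := Ua5 j hij (by rw [hdeg a]; omega)
      rwa [S3a] at this
    have hd2e : d2 ≤ scdF (m b) d2 j := by
      have := Ub5 j hij (by rw [hdeg b]; omega)
      rwa [S3b] at this
    -- cross bounds
    have hd2a : d2 ≤ m a := le_trans (heq ▸ hd2e) Ta1
    have hd1b : d1 ≤ m b := le_trans (heq.symm ▸ hd1e) Tb1
    have hab : a = b := le_antisymm (idx_min d1 hex1 b hd1b) (idx_min d2 hex2 a hd2a)
    -- coherence
    rw [← hab] at Tb4 heq
    have hchain : scdF (m a) d1 = scdF (m a) d2 := by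
      rw [← Ta4, ← Tb4, heq]
    have hthis : scdF (m a) d1 i = scdF (m a) d2 i := by rw [hchain]
    have hS3b' : scdF (m a) d2 i = d2 := by rw [hab]; exact S3b
    rw [S3a, hS3b'] at hthis
    exact hthis
  · -- finiteness
    apply Set.Finite.subset (Set.finite_iUnion fun a : Fin (h k) => Set.finite_Iic (m a))
    rintro d ⟨_, a, ha⟩
    exact Set.mem_iUnion.2 ⟨a, ha⟩
end

section
/- Let m_1, …, m_s (s ≥ 1) be monomials of degree k ≥ 1 in the polynomial ring ℂ[x_1, …, x_n], let I be the (monomial) ideal generated by all monomials that divide none of m_1, …, m_s, and let R = ℂ[x_1, …, x_n]/I with its standard grading. Let ω ∈ R_1 be the image of x_1 + … + x_n. Then for every i with 0 ≤ i and 2i < k, the multiplication map R_i → R_{k−i}, α ↦ α · ω^{k−2i}, is injective. -/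
/-!
Fix a monomial `x^A` of degree `k` and consider coefficient functions on the divisors of `x^A`
(the box of `A`). Multiplication by `x_1 + ⋯ + x_n` followed by truncation to the box, the
lowering operator `c ↦ (d ↦ ∑ₜ (dₜ + 1)(Aₜ - dₜ) c(d + eₜ))` and the grading `d ↦ 2|d| - k` form an
`sl₂`-triple: the box is the tensor product of the irreducible representations of dimensions
`Aₜ + 1`. The truncated coefficients `v` of a homogeneous `r` of degree `i` have weight `-(k - 2i)`
and are killed by a power of the lowering operator. If `r · ω^(k-2i) ∈ I`, the coefficients of
`r · (x_1 + ⋯ + x_n)^(k-2i)` vanish on the box of every `m_j`, so `e^(k-2i) v = 0`, and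
`sl₂`-theory forces `v = 0`; hence `r ∈ I`.
-/

attribute [local instance] LieRing.ofAssociativeRing

section Corner

variable {A : Type*} [Ring A] {h e f p : A}

theorem IsSl2Triple.corner (t : IsSl2Triple h e f) (hp : IsIdempotentElem p)
    (hph : Commute p h) (hpf : Commute p f) (h0 : p * h * p ≠ 0) :
    IsSl2Triple (p * h * p) (p * e * p) (p * f * p) := by
  have hpp (x : A) : p * (p * x) = p * x := by rw [← mul_assoc, hp.eq]
  have hph' (x : A) : p * (h * x) = h * (p * x) := by rw [← mul_assoc, hph.eq, mul_assoc]
  have hpf' (x : A) : p * (f * x) = f * (p * x) := by rw [← mul_assoc, hpf.eq, mul_assoc]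
  obtain ⟨-, hef, hhe, hhf⟩ := t
  simp only [Ring.lie_def] at hef hhe hhf
  refine ⟨h0, ?_, ?_, ?_⟩ <;> simp only [Ring.lie_def] <;>
    [rw [← hef]; rw [← smul_mul_assoc, ← mul_smul_comm, ← hhe];
      rw [← smul_mul_assoc, ← mul_smul_comm, ← neg_mul, ← mul_neg, ← hhf]] <;>
    simp only [mul_sub, sub_mul, mul_assoc, hp.eq, hpp, hph.eq, hph', hpf.eq, hpf']

end Corner

section Sl2Module

variable {R V : Type*} [CommRing R] [AddCommGroup V] [Module R V] {h e f : Module.End R V}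

theorem IsSl2Triple.apply_pow_e_of_apply_eq_smul (t : IsSl2Triple h e f) {v : V} {μ : R}
    (hv : h v = μ • v) (n : ℕ) : h ((e ^ n) v) = (μ + 2 * n) • (e ^ n) v := by
  simpa using t.lie_h_pow_toEnd_e (M := V) (R := R) (m := v) (μ := μ) (by simpa using hv) n

theorem IsSl2Triple.f_apply_pow_e_succ (t : IsSl2Triple h e f) {v : V} {μ : R}
    (hv : h v = μ • v) (a : ℕ) :
    f ((e ^ (a + 1)) v) = (e ^ (a + 1)) (f v) - ((a + 1) * (μ + a)) • (e ^ a) v := by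
  have hef (w : V) : f (e w) = e (f w) - h w := by
    rw [← t.lie_e_f, Ring.lie_def, LinearMap.sub_apply, Module.End.mul_apply,
      Module.End.mul_apply, sub_sub_cancel]
  induction a with
  | zero => simp [hef, hv]
  | succ a ih =>
    have hh := t.apply_pow_e_of_apply_eq_smul hv (a + 1)
    simp only [Module.End.pow_apply, Function.iterate_succ_apply'] at ih hh ⊢
    rw [hef, ih, hh, map_sub, map_smul, sub_sub, ← add_smul]
    congr 2
    push_cast
    ring

theorem IsSl2Triple.apply_f_of_apply_eq_smul (t : IsSl2Triple h e f) {v : V} {μ : R}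
    (hv : h v = μ • v) : h (f v) = (μ - 2) • f v := by
  have := congr($(t.lie_h_f_nsmul) v)
  simp only [Ring.lie_def, LinearMap.sub_apply, Module.End.mul_apply, LinearMap.neg_apply,
    LinearMap.smul_apply, hv, map_smul] at this
  linear_combination (norm := module) this

variable [IsDomain R] [CharZero R] [Module.IsTorsionFree R V]

theorem IsSl2Triple.eq_zero_of_pow_e_apply_eq_zero (t : IsSl2Triple h e f) {v : V} {m p : ℕ}
    (hv : h v = -(m : R) • v) (he : (e ^ m) v = 0) (hf : (f ^ p) v = 0) : v = 0 := by
  induction p generalizing m v with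
  | zero => simpa using hf
  | succ p ih =>
    have hfv : f v = 0 := by
      refine ih (m := m + 2) ?_ ?_ (by rwa [pow_succ, Module.End.mul_apply] at hf)
      · rw [t.apply_f_of_apply_eq_smul hv]
        push_cast
        module
      · have hz (j : ℕ) : (e ^ (m + j)) v = 0 := by
          rw [add_comm, pow_add, Module.End.mul_apply, he, map_zero]
        have hcomm := t.f_apply_pow_e_succ hv (m + 1)
        rw [hz 1, show m + 1 + 1 = m + 2 from rfl, hz 2, map_zero, smul_zero, sub_zero] at hcomm
        exact hcomm.symm
    by_contra hv0
    -- `v` is now a lowest weight vector of weight `-m`, so its `e`-string has length `m + 1`.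
    have hprim : t.symm.HasPrimitiveVectorWith v (m : R) :=
      ⟨hv0, by simp [hv], by simpa using hfv⟩
    exact hprim.pow_toEnd_f_ne_zero_of_eq_nat rfl le_rfl (by simpa using he)

end Sl2Module

open MvPolynomial Finsupp LinearMap

theorem Finsupp.eq_of_le_of_not_add_single_le {σ : Type*} {d A : σ →₀ ℕ} {t : σ} (hd : d ≤ A)
    (hdt : ¬ d + single t 1 ≤ A) : d t = A t := by
  classical
  refine le_antisymm (hd t) (not_lt.mp fun hlt => hdt fun x => ?_)
  rw [Finsupp.add_apply, Finsupp.single_apply]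
  split_ifs with hx
  · exact hx ▸ hlt
  · exact hd x

theorem MvPolynomial.mem_span_monomial_not_le_iff {σ R ι : Type*} [CommRing R] (M : ι → σ →₀ ℕ)
    (r : MvPolynomial σ R) :
    r ∈ Ideal.span ((fun d => monomial d (1 : R)) '' {d | ∀ j, ¬ d ≤ M j}) ↔
      ∀ j, ∀ d ≤ M j, coeff d r = 0 := by
  rw [mem_ideal_span_monomial_image]
  constructor
  · intro h j d hd
    by_contra hc
    obtain ⟨s, hs, hsd⟩ := h d (mem_support_iff.mpr hc)
    exact hs j (hsd.trans hd)
  · intro h d hd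
    exact ⟨d, fun j hdj => mem_support_iff.mp hd (h j d hdj), le_rfl⟩

noncomputable section

namespace MonomialBox

variable (R : Type*) {σ : Type*} [CommRing R]

def mulX (t : σ) : Module.End R ((σ →₀ ℕ) → R) :=
  LinearMap.pi fun d => if d t = 0 then 0 else proj (d - single t 1)

def lower (A : σ →₀ ℕ) (t : σ) : Module.End R ((σ →₀ ℕ) → R) :=
  LinearMap.pi fun d => (((d t : R) + 1) * ((A t : R) - d t)) • proj (d + single t 1)

def boxProj (A : σ →₀ ℕ) : Module.End R ((σ →₀ ℕ) → R) :=
  mulLeft R fun d => if d ≤ A then 1 else 0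

def weight (A : σ →₀ ℕ) : Module.End R ((σ →₀ ℕ) → R) :=
  mulLeft R fun d => 2 * (d.degree : R) - A.degree

variable {R}

@[simp]
theorem mulX_apply (t : σ) (c : (σ →₀ ℕ) → R) (d : σ →₀ ℕ) :
    mulX R t c d = if d t = 0 then 0 else c (d - single t 1) := by
  unfold mulX; split_ifs <;> simp [*]

@[simp]
theorem lower_apply (A : σ →₀ ℕ) (t : σ) (c : (σ →₀ ℕ) → R) (d : σ →₀ ℕ) :
    lower R A t c d = ((d t : R) + 1) * ((A t : R) - d t) * c (d + single t 1) := by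
  simp [lower]

@[simp]
theorem boxProj_apply (A : σ →₀ ℕ) (c : (σ →₀ ℕ) → R) (d : σ →₀ ℕ) :
    boxProj R A c d = if d ≤ A then c d else 0 := by
  simp [boxProj]

@[simp]
theorem weight_apply (A : σ →₀ ℕ) (c : (σ →₀ ℕ) → R) (d : σ →₀ ℕ) :
    weight R A c d = (2 * (d.degree : R) - A.degree) * c d := by
  simp [weight]

theorem lie_mulX_lower_self (t : σ) (A : σ →₀ ℕ) :
    ⁅mulX R t, lower R A t⁆ = mulLeft R fun d => 2 * (d t : R) - A t := by
  ext c d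
  simp only [Ring.lie_def, LinearMap.sub_apply, Module.End.mul_apply, mulLeft_apply, Pi.mul_apply]
  rcases Nat.eq_zero_or_pos (d t) with hd | hd
  · simp [hd]
  · have hcancel : d - single t 1 + single t 1 = d := tsub_add_cancel_of_le (single_le_iff.mpr hd)
    simp [hd.ne', hcancel, Nat.cast_sub (Nat.one_le_iff_ne_zero.mpr hd.ne')]
    ring

theorem lie_mulLeft_mulX {w : (σ →₀ ℕ) → R} {t : σ} {a : ℕ}
    (hw : ∀ d, w (d + single t 1) = w d + a) : ⁅mulLeft R w, mulX R t⁆ = a • mulX R t := by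
  ext c d
  simp only [Ring.lie_def, LinearMap.sub_apply, Module.End.mul_apply, mulLeft_apply, Pi.sub_apply,
    Pi.mul_apply, mulX_apply, LinearMap.smul_apply, Pi.smul_apply]
  rw [nsmul_eq_mul]
  split_ifs with hd
  · ring
  · have hwd := hw (d - single t 1)
    rw [tsub_add_cancel_of_le (single_le_iff.mpr (Nat.one_le_iff_ne_zero.mpr hd))] at hwd
    rw [hwd]
    ring

theorem lie_mulLeft_lower {w : (σ →₀ ℕ) → R} {t : σ} {a : ℕ} (A : σ →₀ ℕ)
    (hw : ∀ d, w (d + single t 1) = w d + a) :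
    ⁅mulLeft R w, lower R A t⁆ = -(a • lower R A t) := by
  ext c d
  simp only [Ring.lie_def, LinearMap.sub_apply, Module.End.mul_apply, mulLeft_apply, Pi.sub_apply,
    Pi.mul_apply, lower_apply, LinearMap.neg_apply, LinearMap.smul_apply, Pi.neg_apply,
    Pi.smul_apply, hw]
  rw [nsmul_eq_mul]
  ring

theorem boxProj_isIdempotentElem (A : σ →₀ ℕ) : IsIdempotentElem (boxProj R A) := by
  ext c d
  simp only [Module.End.mul_apply, boxProj_apply]
  split_ifs <;> rfl

theorem commute_boxProj_mulLeft (A : σ →₀ ℕ) (w : (σ →₀ ℕ) → R) :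
    Commute (boxProj R A) (mulLeft R w) := by
  ext c d
  simp only [Module.End.mul_apply, boxProj_apply, mulLeft_apply, Pi.mul_apply]
  split_ifs <;> simp

theorem commute_boxProj_lower (A : σ →₀ ℕ) (t : σ) :
    Commute (boxProj R A) (lower R A t) := by
  ext c d
  simp only [Module.End.mul_apply, boxProj_apply, lower_apply]
  by_cases hd : d ≤ A
  · by_cases hdt : d + single t 1 ≤ A
    · simp [hd, hdt]
    · simp [hd, hdt, Finsupp.eq_of_le_of_not_add_single_le hd hdt]
  · have hdt : ¬ d + single t 1 ≤ A := fun h => hd (le_trans le_self_add h)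
    simp [hd, hdt]

theorem boxProj_mul_mulX_mul_boxProj (A : σ →₀ ℕ) (t : σ) :
    boxProj R A * mulX R t * boxProj R A = boxProj R A * mulX R t := by
  ext c d
  simp only [Module.End.mul_apply, boxProj_apply, mulX_apply]
  split_ifs with hd hdt h' <;> first | rfl | exact absurd (tsub_le_self.trans hd) h'

section DecidableEq

variable [DecidableEq σ]

theorem commute_mulX_lower {t u : σ} (htu : t ≠ u) (A : σ →₀ ℕ) :
    Commute (mulX R t) (lower R A u) := by
  ext c d
  have hsub : d - single t 1 + single u 1 = d + single u 1 - single t 1 := Finsupp.ext fun x => by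
    simp only [Finsupp.coe_add, Finsupp.coe_tsub, Pi.add_apply, Pi.sub_apply]
    grind
  simp [htu, htu.symm, hsub]

theorem mulX_coeff (t : σ) (p : MvPolynomial σ R) :
    mulX R t (fun d => coeff d p) = fun d => coeff d (p * X t) := by
  ext d
  simp [coeff_mul_X']

end DecidableEq

section Fintype

variable [Fintype σ]

variable (R σ) in
def mulSumX : Module.End R ((σ →₀ ℕ) → R) :=
  ∑ t, mulX R t

variable (R) in
def lowerSum (A : σ →₀ ℕ) : Module.End R ((σ →₀ ℕ) → R) :=
  ∑ t, lower R A t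

theorem lie_weight_mulSumX (A : σ →₀ ℕ) : ⁅weight R A, mulSumX R σ⁆ = 2 • mulSumX R σ := by
  simp only [mulSumX, lie_sum, Finset.smul_sum]
  refine Finset.sum_congr rfl fun t _ => lie_mulLeft_mulX fun d => ?_
  simp
  ring

theorem lie_weight_lowerSum (A : σ →₀ ℕ) : ⁅weight R A, lowerSum R A⁆ = -(2 • lowerSum R A) := by
  simp only [lowerSum, lie_sum, Finset.smul_sum, ← Finset.sum_neg_distrib]
  refine Finset.sum_congr rfl fun t _ => lie_mulLeft_lower A fun d => ?_
  simp
  ring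

theorem commute_boxProj_lowerSum (A : σ →₀ ℕ) : Commute (boxProj R A) (lowerSum R A) :=
  Commute.sum_right _ _ _ fun t _ => commute_boxProj_lower A t

theorem boxProj_mul_mulSumX_mul_boxProj (A : σ →₀ ℕ) :
    boxProj R A * mulSumX R σ * boxProj R A = boxProj R A * mulSumX R σ := by
  simp only [mulSumX, Finset.mul_sum, Finset.sum_mul, boxProj_mul_mulX_mul_boxProj]

theorem lowerSum_pow_apply_eq_zero (A : σ →₀ ℕ) {c : (σ →₀ ℕ) → R} {i : ℕ}
    (hc : ∀ d : σ →₀ ℕ, d.degree ≠ i → c d = 0) (j : ℕ) {d : σ →₀ ℕ} (hd : d.degree + j ≠ i) :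
    (lowerSum R A ^ j) c d = 0 := by
  induction j generalizing d with
  | zero => simpa using hc d hd
  | succ j ih =>
    simp only [pow_succ', Module.End.mul_apply, lowerSum, LinearMap.sum_apply, Finset.sum_apply,
      lower_apply] at ih ⊢
    refine Finset.sum_eq_zero fun t _ => ?_
    rw [ih (d := d + single t 1) (by rw [map_add, degree_single]; omega), mul_zero]

variable [DecidableEq σ]

theorem lie_mulSumX_lowerSum (A : σ →₀ ℕ) : ⁅mulSumX R σ, lowerSum R A⁆ = weight R A := by
  have hoff (u t : σ) (htu : t ≠ u) : ⁅mulX R t, lower R A u⁆ = 0 :=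
    commute_iff_lie_eq.mp (commute_mulX_lower htu A)
  simp only [mulSumX, lowerSum, lie_sum, sum_lie]
  rw [Finset.sum_congr rfl fun u _ => Finset.sum_eq_single u (fun t _ => hoff u t) (by simp)]
  ext c d
  simp [lie_mulX_lower_self, degree_eq_sum, ← Finset.sum_mul, Finset.mul_sum]

theorem isSl2Triple_boxProj [CharZero R] {A : σ →₀ ℕ} (hA : A ≠ 0) :
    IsSl2Triple (boxProj R A * weight R A * boxProj R A) (boxProj R A * mulSumX R σ * boxProj R A)
      (boxProj R A * lowerSum R A * boxProj R A) := by
  have h0 : boxProj R A * weight R A * boxProj R A ≠ 0 := fun h => by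
    simpa [degree_eq_zero_iff, hA] using congr($h (fun _ => 1) 0)
  exact IsSl2Triple.corner ⟨fun h => h0 (by simp [h]), lie_mulSumX_lowerSum A,
    lie_weight_mulSumX A, lie_weight_lowerSum A⟩ (boxProj_isIdempotentElem A)
    (commute_boxProj_mulLeft A _) (commute_boxProj_lowerSum A) h0

theorem mulSumX_coeff (p : MvPolynomial σ R) :
    mulSumX R σ (fun d => coeff d p) = fun d => coeff d (p * ∑ t, X t) := by
  ext d
  simp [mulSumX, mulX_coeff, Finset.mul_sum, coeff_sum]

theorem boxProj_mulSumX_pow_coeff (A : σ →₀ ℕ) (p : MvPolynomial σ R) (m : ℕ) :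
    ((boxProj R A * mulSumX R σ * boxProj R A) ^ m) (boxProj R A fun d => coeff d p) =
      boxProj R A fun d => coeff d (p * (∑ t, X t) ^ m) := by
  induction m with
  | zero => simp
  | succ m ih =>
    rw [pow_succ', Module.End.mul_apply, ih, ← Module.End.mul_apply,
      mul_assoc (boxProj R A * mulSumX R σ), (boxProj_isIdempotentElem A).eq,
      boxProj_mul_mulSumX_mul_boxProj, Module.End.mul_apply, mulSumX_coeff, pow_succ, mul_assoc]

theorem coeff_eq_zero_of_coeff_mul_sum_X_pow_eq_zero [IsDomain R] [CharZero R] {A : σ →₀ ℕ}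
    {k i : ℕ} (hA : A.degree = k) (hi : 2 * i < k) {r : MvPolynomial σ R} (hr : r.IsHomogeneous i)
    (h : ∀ d ≤ A, coeff d (r * (∑ t, X t) ^ (k - 2 * i)) = 0) {d : σ →₀ ℕ} (hd : d ≤ A) :
    coeff d r = 0 := by
  set P := boxProj R A
  set v := P fun d => coeff d r
  have hP : IsIdempotentElem P := boxProj_isIdempotentElem A
  have hA0 : A ≠ 0 := by rintro rfl; simp at hA; omega
  have hv : ∀ d : σ →₀ ℕ, d.degree ≠ i → v d = 0 := fun d hd => by simp [v, P, hr.coeff_eq_zero hd]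
  have hweight : (P * weight R A * P) v = -((k - 2 * i : ℕ) : R) • v := by
    ext d
    by_cases hd : d.degree = i
    · simp only [v, P, Module.End.mul_apply, boxProj_apply, weight_apply, Pi.smul_apply,
        smul_eq_mul, hd, hA, Nat.cast_sub hi.le]
      split_ifs <;> push_cast <;> ring
    · simp [P, hv d hd]
  have hraise : ((P * mulSumX R σ * P) ^ (k - 2 * i)) v = 0 := by
    rw [boxProj_mulSumX_pow_coeff]
    ext d
    simpa using fun hd => h d hd
  have hlower : ((P * lowerSum R A * P) ^ (i + 1)) v = 0 := by
    have hPF := commute_boxProj_lowerSum (R := R) A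
    rw [mul_assoc, ← hPF.eq, ← mul_assoc, hP.eq, hPF.mul_pow, hP.pow_succ_eq, Module.End.mul_apply]
    convert map_zero P
    exact funext fun d => lowerSum_pow_apply_eq_zero A hv _ (by omega)
  have hv0 := (isSl2Triple_boxProj hA0).eq_zero_of_pow_e_apply_eq_zero hweight hraise hlower
  simpa [v, P, hd] using congr_fun hv0 d

end Fintype

end MonomialBox

end

theorem ihl_of_pure_monomial_quotient_general
    (n s k : ℕ) (m : Fin s → Fin n → ℕ)
    (hdeg : ∀ j, ∑ t, m j t = k)
    (I : Ideal (MvPolynomial (Fin n) ℂ))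
    (hI : I = Ideal.span
      {p | ∃ d : Fin n → ℕ, (∀ j, ¬ d ≤ m j) ∧
        p = MvPolynomial.monomial (Finsupp.equivFunOnFinite.symm d) (1 : ℂ)})
    (ω : MvPolynomial (Fin n) ℂ ⧸ I)
    (hω : ω = Ideal.Quotient.mk I (∑ t : Fin n, X t)) :
    ∀ i : ℕ, 2 * i < k →
      Set.InjOn (fun a : MvPolynomial (Fin n) ℂ ⧸ I => a * ω ^ (k - 2 * i))
        (((MvPolynomial.homogeneousSubmodule (Fin n) ℂ i).map
          (Ideal.Quotient.mkₐ ℂ I).toLinearMap : Submodule ℂ _) :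
            Set (MvPolynomial (Fin n) ℂ ⧸ I)) := by
  set M : Fin s → Fin n →₀ ℕ := fun j => Finsupp.equivFunOnFinite.symm (m j)
  have hI' : I = Ideal.span ((fun d => monomial d (1 : ℂ)) '' {d | ∀ j, ¬ d ≤ M j}) := by
    rw [hI]
    congr 1
    ext p
    simp only [M, Set.mem_ofPred_eq, Set.mem_image, equivFunOnFinite.exists_congr_left,
      ← coe_le_coe, coe_equivFunOnFinite_symm, eq_comm]
  have hM (j : Fin s) : (M j).degree = k := by simp [M, degree_eq_sum, hdeg]
  intro i hi
  rintro _ ⟨p, hp, rfl⟩ _ ⟨q, hq, rfl⟩ hpq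
  simp only [SetLike.mem_coe, mem_homogeneousSubmodule] at hp hq
  simp only [AlgHom.toLinearMap_apply, Ideal.Quotient.mkₐ_eq_mk, hω, ← map_pow, ← map_mul,
    Ideal.Quotient.eq, ← sub_mul] at hpq ⊢
  rw [hI', mem_span_monomial_not_le_iff] at hpq ⊢
  exact fun j d hd => MonomialBox.coeff_eq_zero_of_coeff_mul_sum_X_pow_eq_zero (hM j) hi
    (hp.sub hq) (hpq j) hd

/-- Let `m 1, …, m s` (`s ≥ 1`) be monomials of degree `k ≥ 1` in `ℂ[x_1, …, x_n]`
(identified with their exponent vectors), let `I` be the ideal generated by all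
monomials dividing none of the `m j`, and `R = ℂ[x_1, …, x_n]/I`. Then for the image
`ω` of `x_1 + … + x_n`, and every `i` with `2i < k`, multiplication by `ω^(k-2i)` is
injective on the degree-`i` graded piece `R_i` (the image of the homogeneous
degree-`i` polynomials). -/
theorem ihl_of_pure_monomial_quotient
    (n s k : ℕ) (hs : 1 ≤ s) (hk : 1 ≤ k) (m : Fin s → Fin n → ℕ)
    (hdeg : ∀ j, ∑ t, m j t = k)
    (I : Ideal (MvPolynomial (Fin n) ℂ))
    (hI : I = Ideal.span
      {p | ∃ d : Fin n → ℕ, (∀ j, ¬ d ≤ m j) ∧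
        p = MvPolynomial.monomial (Finsupp.equivFunOnFinite.symm d) (1 : ℂ)})
    (ω : MvPolynomial (Fin n) ℂ ⧸ I)
    (hω : ω = Ideal.Quotient.mk I (∑ t : Fin n, X t)) :
    ∀ i : ℕ, 2 * i < k →
      Set.InjOn (fun a : MvPolynomial (Fin n) ℂ ⧸ I => a * ω ^ (k - 2 * i))
        (((MvPolynomial.homogeneousSubmodule (Fin n) ℂ i).map
          (Ideal.Quotient.mkₐ ℂ I).toLinearMap : Submodule ℂ _) :
            Set (MvPolynomial (Fin n) ℂ ⧸ I)) :=
  ihl_of_pure_monomial_quotient_general n s k m hdeg I hI ω hω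
end
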